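/- Every isometry of (ℝⁿ, d_h) fixing the origin is the restriction of an orthogonal linear map of ℝⁿ, and conversely every orthogonal linear map of ℝⁿ is an isometry of (ℝⁿ, d_h). -/

import Mathlib

noncomputable def arcosh (t : ℝ) : ℝ := Real.log (t + Real.sqrt (t ^ 2 - 1))

noncomputable def br {n : ℕ} (x : EuclideanSpace ℝ (Fin n)) : ℝ :=
  Real.sqrt (1 + ‖x‖ ^ 2)

noncomputable def dh {n : ℕ} (x y : EuclideanSpace ℝ (Fin n)) : ℝ :=
  arcosh (br x * br y - inner ℝ x y)

noncomputable def T {n : ℕ} (y x : EuclideanSpace ℝ (Fin n)) : EuclideanSpace ℝ (Fin n) :=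
  x + (br x + inner ℝ x y / (br y + 1)) • y

/-!
Since `arcosh` is injective on `[1, ∞)` and, by Cauchy–Schwarz, `br x * br y - ⟪x, y⟫ ≥ 1`, a map
preserving `dh` preserves this form. With `br 0 = 1` and `u 0 = 0`, taking `y = 0` shows that `u`
preserves `br`, hence it preserves the Euclidean inner product, so it is a Euclidean isometry
fixing `0`, which is linear by Mazur–Ulam.
-/

open scoped RealInnerProductSpace

theorem arcosh_eq_real_arcosh : arcosh = Real.arcosh := rfl

theorem isometry_of_inner_map_map {E F : Type*} [NormedAddCommGroup E] [InnerProductSpace ℝ E]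
    [NormedAddCommGroup F] [InnerProductSpace ℝ F] {u : E → F}
    (hu : ∀ x y, ⟪u x, u y⟫ = ⟪x, y⟫) : Isometry u := by
  refine Isometry.of_dist_eq fun x y => ?_
  have hsq : ‖u x - u y‖ ^ 2 = ‖x - y‖ ^ 2 := by
    rw [norm_sub_sq_real, norm_sub_sq_real, hu]
    simp only [← real_inner_self_eq_norm_sq, hu]
  rw [dist_eq_norm, dist_eq_norm]
  exact (sq_eq_sq₀ (norm_nonneg _) (norm_nonneg _)).mp hsq

section

variable {n m : ℕ}

@[simp]
theorem br_zero : br (0 : EuclideanSpace ℝ (Fin n)) = 1 := by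
  simp [br]

theorem one_le_br_mul_br_sub_inner (x y : EuclideanSpace ℝ (Fin n)) :
    1 ≤ br x * br y - ⟪x, y⟫ := by
  have hprod : 1 + ‖x‖ * ‖y‖ ≤ br x * br y := by
    rw [br, br, ← Real.sqrt_mul (by positivity)]
    refine Real.le_sqrt_of_sq_le ?_
    nlinarith [sq_nonneg (‖x‖ - ‖y‖)]
  linarith [real_inner_le_norm x y]

theorem dh_eq_dh_iff {x y : EuclideanSpace ℝ (Fin n)} {x' y' : EuclideanSpace ℝ (Fin m)} :
    dh x y = dh x' y' ↔ br x * br y - ⟪x, y⟫ = br x' * br y' - ⟪x', y'⟫ := by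
  rw [dh, dh, arcosh_eq_real_arcosh]
  exact Real.arcosh_injOn.eq_iff (one_le_br_mul_br_sub_inner x y)
    (one_le_br_mul_br_sub_inner x' y')

theorem inner_map_map_of_dh_map_map {u : EuclideanSpace ℝ (Fin n) → EuclideanSpace ℝ (Fin m)}
    (hu : ∀ x y, dh (u x) (u y) = dh x y) (h0 : u 0 = 0) (x y : EuclideanSpace ℝ (Fin n)) :
    ⟪u x, u y⟫ = ⟪x, y⟫ := by
  have hform : ∀ x y, br (u x) * br (u y) - ⟪u x, u y⟫ = br x * br y - ⟪x, y⟫ :=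
    fun x y => dh_eq_dh_iff.mp (hu x y)
  have hbr : ∀ x, br (u x) = br x := fun x => by
    simpa [h0] using hform x 0
  simpa only [hbr, sub_right_inj] using hform x y

theorem dh_map_map (U : EuclideanSpace ℝ (Fin n) →ₗᵢ[ℝ] EuclideanSpace ℝ (Fin m))
    (x y : EuclideanSpace ℝ (Fin n)) : dh (U x) (U y) = dh x y := by
  simp only [dh, br, U.norm_map, U.inner_map_map]

end

theorem dh_isometry_fixing_zero_orthogonal {n : ℕ} :
    (∀ u : EuclideanSpace ℝ (Fin n) → EuclideanSpace ℝ (Fin n),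
      Function.Bijective u → (∀ x y, dh (u x) (u y) = dh x y) → u 0 = 0 →
      ∃ U : EuclideanSpace ℝ (Fin n) ≃ₗᵢ[ℝ] EuclideanSpace ℝ (Fin n), ∀ x, u x = U x) ∧
    (∀ U : EuclideanSpace ℝ (Fin n) ≃ₗᵢ[ℝ] EuclideanSpace ℝ (Fin n),
      ∀ x y, dh (U x) (U y) = dh x y) := by
  refine ⟨fun u hbij hdh h0 => ?_, fun U => dh_map_map U.toLinearIsometry⟩
  let e : EuclideanSpace ℝ (Fin n) ≃ᵢ EuclideanSpace ℝ (Fin n) :=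
    ⟨Equiv.ofBijective u hbij, isometry_of_inner_map_map (inner_map_map_of_dh_map_map hdh h0)⟩
  exact ⟨e.toRealLinearIsometryEquivOfMapZero h0, fun _ => rfl⟩
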